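/- Let n ≥ 2 and k ≥ 2. Then the k-solvable product (ℤ/nℤ) ∗_{s_k} (ℤ/nℤ) is an infinite solvable group. In particular, a verbal product of two finite groups can be infinite. -/

import Mathlib

open Monoid
open scoped commutatorElement

/-- The verbal subgroup `W(G)`: the subgroup of `G` generated by all evaluations of the
words of `W` at tuples of elements of `G`. -/
def verbalSubgroup (W : Set (FreeGroup ℕ)) (G : Type*) [Group G] : Subgroup G :=
  Subgroup.closure {x | ∃ w ∈ W, ∃ f : ℕ → G, FreeGroup.lift f w = x}

theorem lift_comp_eval {G H : Type*} [Group G] [Group H] (φ : G →* H) (f : ℕ → G)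
    (w : FreeGroup ℕ) : φ (FreeGroup.lift f w) = FreeGroup.lift (φ ∘ f) w := by
  have h : φ.comp (FreeGroup.lift f) = FreeGroup.lift (φ ∘ f) :=
    FreeGroup.ext_hom _ _ (fun a => by simp)
  exact DFunLike.congr_fun h w

theorem verbalSubgroup_map_le {G H : Type*} [Group G] [Group H] (W : Set (FreeGroup ℕ))
    (φ : G →* H) : (verbalSubgroup W G).map φ ≤ verbalSubgroup W H := by
  rw [verbalSubgroup, MonoidHom.map_closure, Subgroup.closure_le]
  rintro x ⟨y, ⟨w, hw, f, rfl⟩, rfl⟩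
  exact Subgroup.subset_closure ⟨w, hw, φ ∘ f, (lift_comp_eval φ f w).symm⟩

/-- Verbal subgroups are normal. -/
instance verbalSubgroup_normal (W : Set (FreeGroup ℕ)) (G : Type*) [Group G] :
    (verbalSubgroup W G).Normal := by
  constructor
  intro n hn g
  have h := verbalSubgroup_map_le (G := G) (H := G) W (MulAut.conj g).toMonoidHom
  have h2 : (MulAut.conj g).toMonoidHom n ∈ verbalSubgroup W G := h ⟨n, hn, rfl⟩
  simpa using h2

/-- The subgroup `[A,B]` of the free product `A ∗ B` generated by the commutators
`[a,b] = a * b * a⁻¹ * b⁻¹` with `a ∈ A`, `b ∈ B`. -/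
def commSubgroup (A B : Type*) [Group A] [Group B] : Subgroup (Coprod A B) :=
  Subgroup.closure {x | ∃ (a : A) (b : B), x = ⁅(Coprod.inl a : Coprod A B), Coprod.inr b⁆}

/-- The kernel of the verbal product: (the normal closure of) `W(A ∗ B) ∩ [A,B]`.
Since `W(A ∗ B) ∩ [A,B]` is in fact a normal subgroup of `A ∗ B`, taking the normal
closure does not change the subgroup. -/
def verbalProductKer (W : Set (FreeGroup ℕ)) (A B : Type*) [Group A] [Group B] :
    Subgroup (Coprod A B) :=
  Subgroup.normalClosure ((verbalSubgroup W (Coprod A B) ⊓ commSubgroup A B : Subgroup _) : Set _)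

instance verbalProductKer_normal (W : Set (FreeGroup ℕ)) (A B : Type*) [Group A] [Group B] :
    (verbalProductKer W A B).Normal := Subgroup.normalClosure_normal

/-- The verbal product `A ∗_W B := (A ∗ B)/(W(A ∗ B) ∩ [A,B])`. -/
abbrev VerbalProduct (W : Set (FreeGroup ℕ)) (A B : Type*) [Group A] [Group B] : Type _ :=
  Coprod A B ⧸ verbalProductKer W A B

/-- The quotient homomorphism `q : A ∗ B → A ∗_W B`. -/
def vq (W : Set (FreeGroup ℕ)) (A B : Type*) [Group A] [Group B] :
    Coprod A B →* VerbalProduct W A B :=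
  QuotientGroup.mk' (verbalProductKer W A B)

/-- The copy of `A` inside the verbal product `A ∗_W B`. -/
def vinl (W : Set (FreeGroup ℕ)) (A B : Type*) [Group A] [Group B] :
    A →* VerbalProduct W A B := (vq W A B).comp Coprod.inl

/-- The copy of `B` inside the verbal product `A ∗_W B`. -/
def vinr (W : Set (FreeGroup ℕ)) (A B : Type*) [Group A] [Group B] :
    B →* VerbalProduct W A B := (vq W A B).comp Coprod.inr

/-- `[A,B]^w`, the image of `[A,B]` in the verbal product `A ∗_W B`. -/
def commW (W : Set (FreeGroup ℕ)) (A B : Type*) [Group A] [Group B] :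
    Subgroup (VerbalProduct W A B) := (commSubgroup A B).map (vq W A B)

/-- The words `s_k` defining solvable products: `s_1 = [x_1, x_2]` and
`s_k(x_1, …, x_{2^k}) = [s_{k-1}(x_1, …, x_{2^{k-1}}), s_{k-1}(x_{2^{k-1}+1}, …, x_{2^k})]`
(generators indexed from `0`; the second factor is obtained by shifting the generators
by `2^{k-1}`). -/
def sWord : ℕ → FreeGroup ℕ
  | 0 => 1
  | 1 => ⁅FreeGroup.of 0, FreeGroup.of 1⁆
  | (k + 2) => ⁅sWord (k + 1),
      FreeGroup.lift (fun i => FreeGroup.of (i + 2 ^ (k + 1))) (sWord (k + 1))⁆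

/-! For abelian `A` and `B`, the values of `s_k` generate the `k`-th derived subgroup, and `[A,B]`
contains the commutator subgroup of `A ∗ B`; hence `A ∗_{s_k} B = (A ∗ B) / (A ∗ B)⁽ᵏ⁾`, which is
solvable. To see that it is infinite when `A = B = ℤ/nℤ`, map `A ∗ A` to the metabelian affine group
`ℂ ⋊ ℂˣ`, sending the first factor to the rotations `z ↦ ζ z` by `n`-th roots of unity and the
second to their conjugates by the translation `z ↦ z + 1`. For `k ≥ 2` this map factors through the
verbal product, and it sends `a⁻¹ b` (`a`, `b` the two generators) to the translation by
`ζ⁻¹ - 1 ≠ 0`, which has infinite order. -/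

open Subgroup

section Words

variable {G : Type*} [Group G]

theorem lift_sWord_one (f : ℕ → G) : FreeGroup.lift f (sWord 1) = ⁅f 0, f 1⁆ := by
  simp [sWord, map_commutatorElement]

theorem lift_sWord_add_two (k : ℕ) (f : ℕ → G) :
    FreeGroup.lift f (sWord (k + 2)) = ⁅FreeGroup.lift f (sWord (k + 1)),
      FreeGroup.lift (fun i => f (i + 2 ^ (k + 1))) (sWord (k + 1))⁆ := by
  simp [sWord, map_commutatorElement, lift_comp_eval, Function.comp_def]

theorem lift_sWord_mem_derivedSeries : ∀ (k : ℕ) (f : ℕ → G),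
    FreeGroup.lift f (sWord k) ∈ derivedSeries G k
  | 0, _ => mem_top _
  | 1, f => lift_sWord_one f ▸ commutator_mem_commutator (mem_top _) (mem_top _)
  | k + 2, f => lift_sWord_add_two k f ▸ commutator_mem_commutator
      (lift_sWord_mem_derivedSeries (k + 1) _) (lift_sWord_mem_derivedSeries (k + 1) _)

theorem lift_sWord_congr : ∀ (k : ℕ) {f g : ℕ → G}, (∀ i < 2 ^ k, f i = g i) →
    FreeGroup.lift f (sWord k) = FreeGroup.lift g (sWord k)
  | 0, _, _, _ => rfl
  | 1, f, g, h => by simp only [lift_sWord_one, h 0 (by norm_num), h 1 (by norm_num)]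
  | k + 2, f, g, h => by
      have h2 : 2 ^ (k + 2) = 2 ^ (k + 1) + 2 ^ (k + 1) := by ring
      rw [lift_sWord_add_two, lift_sWord_add_two,
        lift_sWord_congr (k + 1) fun i hi => h i (by omega),
        lift_sWord_congr (k + 1) fun i hi => h (i + 2 ^ (k + 1)) (by omega)]

theorem verbalSubgroup_sWord_le_derivedSeries (k : ℕ) :
    verbalSubgroup {sWord k} G ≤ derivedSeries G k := by
  rw [verbalSubgroup, closure_le]
  rintro _ ⟨_, rfl, f, rfl⟩
  exact lift_sWord_mem_derivedSeries k f

theorem commutator_closure_le {S T : Set G} {N : Subgroup G} [N.Normal]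
    (h : ∀ s ∈ S, ∀ t ∈ T, ⁅s, t⁆ ∈ N) : ⁅closure S, closure T⁆ ≤ N := by
  rw [← QuotientGroup.ker_mk' N, ← Subgroup.map_eq_bot_iff, map_commutator, MonoidHom.map_closure,
    MonoidHom.map_closure, commutator_eq_bot_iff_le_centralizer, closure_le,
    centralizer_closure]
  rintro _ ⟨s, hs, rfl⟩ _ ⟨t, ht, rfl⟩
  refine (commutatorElement_eq_one_iff_commute.mp ?_).eq.symm
  rw [← map_commutatorElement, ← MonoidHom.mem_ker, QuotientGroup.ker_mk']
  exact h s hs t ht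

theorem derivedSeries_le_verbalSubgroup_sWord : ∀ k : ℕ,
    derivedSeries G (k + 1) ≤ verbalSubgroup {sWord (k + 1)} G
  | 0 => by
      rw [derivedSeries_succ, derivedSeries_zero, commutator_le]
      intro x _ y _
      exact subset_closure ⟨_, rfl, fun i => if i = 0 then x else y, by simp [lift_sWord_one]⟩
  | k + 1 => by
      rw [derivedSeries_succ]
      refine (commutator_mono (derivedSeries_le_verbalSubgroup_sWord k)
        (derivedSeries_le_verbalSubgroup_sWord k)).trans (commutator_closure_le ?_)
      rintro _ ⟨_, rfl, f, rfl⟩ _ ⟨_, rfl, g, rfl⟩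
      -- concatenating the two tuples makes `⁅s(f), s(g)⁆` a single value of `s_{k+2}`
      refine subset_closure
        ⟨_, rfl, fun i => if i < 2 ^ (k + 1) then f i else g (i - 2 ^ (k + 1)), ?_⟩
      rw [lift_sWord_add_two]
      congr 1 <;> apply lift_sWord_congr <;> intro i hi <;> simp [hi]

theorem verbalSubgroup_sWord_eq_derivedSeries (k : ℕ) :
    verbalSubgroup {sWord (k + 1)} G = derivedSeries G (k + 1) :=
  (verbalSubgroup_sWord_le_derivedSeries _).antisymm (derivedSeries_le_verbalSubgroup_sWord k)

end Words

theorem isSolvable_quotient_of_derivedSeries_le {G : Type*} [Group G] {N : Subgroup G} [N.Normal]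
    {n : ℕ} (h : derivedSeries G n ≤ N) : Group.IsSolvable (G ⧸ N) := by
  refine ⟨n, ?_⟩
  rw [← map_derivedSeries_eq (QuotientGroup.mk'_surjective N), Subgroup.map_eq_bot_iff,
    QuotientGroup.ker_mk']
  exact h

theorem commSubgroup_eq_commutator_range (A B : Type*) [Group A] [Group B] :
    commSubgroup A B = ⁅(Coprod.inl : A →* Coprod A B).range, Coprod.inr.range⁆ := by
  rw [commSubgroup, Subgroup.commutator_def]
  congr
  ext
  simp [eq_comm]

instance commSubgroup_normal (A B : Type*) [Group A] [Group B] : (commSubgroup A B).Normal := by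
  rw [commSubgroup_eq_commutator_range, ← normalizer_eq_top_iff, eq_top_iff,
    ← Coprod.range_inl_sup_range_inr]
  exact sup_le (normalizer_commutator_ge_left _ _) (normalizer_commutator_ge_right _ _)

section Abelian

variable {A B : Type*} [CommGroup A] [CommGroup B]

theorem commutator_le_commSubgroup : commutator (Coprod A B) ≤ commSubgroup A B := by
  set q := QuotientGroup.mk' (commSubgroup A B)
  have hcomm (a : A) (b : B) : Commute (q (Coprod.inl a)) (q (Coprod.inr b)) := by
    rw [← commutatorElement_eq_one_iff_commute, ← map_commutatorElement, ← MonoidHom.mem_ker,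
      QuotientGroup.ker_mk']
    exact subset_closure ⟨a, b, rfl⟩
  have hfactor : (MonoidHom.noncommCoprod (q.comp Coprod.inl) (q.comp Coprod.inr) hcomm).comp
      (Coprod.lift (MonoidHom.inl A B) (MonoidHom.inr A B)) = q := by
    refine Coprod.hom_ext ?_ ?_ <;> ext <;> simp [MonoidHom.noncommCoprod_apply]
  calc commutator (Coprod A B)
      ≤ (Coprod.lift (MonoidHom.inl A B) (MonoidHom.inr A B)).ker :=
        Abelianization.commutator_subset_ker _
    _ ≤ q.ker := by
        rw [← hfactor, ← MonoidHom.comap_ker]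
        exact MonoidHom.ker_le_comap _ _
    _ = commSubgroup A B := QuotientGroup.ker_mk' _

theorem verbalProductKer_sWord_eq_derivedSeries (k : ℕ) :
    verbalProductKer {sWord (k + 1)} A B = derivedSeries (Coprod A B) (k + 1) := by
  have hle : derivedSeries (Coprod A B) (k + 1) ≤ commSubgroup A B :=
    (derivedSeries_antitone (Coprod A B) (by omega : 1 ≤ k + 1)).trans commutator_le_commSubgroup
  rw [verbalProductKer, verbalSubgroup_sWord_eq_derivedSeries, inf_eq_left.mpr hle,
    normalClosure_eq_self]

theorem isSolvable_verbalProduct_sWord (k : ℕ) :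
    Group.IsSolvable (VerbalProduct {sWord (k + 1)} A B) :=
  isSolvable_quotient_of_derivedSeries_le (verbalProductKer_sWord_eq_derivedSeries k).ge

end Abelian

theorem SemidirectProduct.derivedSeries_two_eq_bot {N H : Type*} [CommGroup N] [CommGroup H]
    (φ : H →* MulAut N) : derivedSeries (N ⋊[φ] H) 2 = ⊥ := by
  set L := (inl : N →* N ⋊[φ] H).range with hL
  have h1 : derivedSeries (N ⋊[φ] H) 1 ≤ L := by
    rw [hL, range_inl_eq_ker_rightHom]
    exact Abelianization.commutator_subset_ker _
  have hinl : ⁅L, L⁆ = ⊥ := by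
    rw [commutator_eq_bot_iff_le_centralizer]
    rintro _ ⟨x, rfl⟩
    rw [mem_centralizer_iff]
    rintro _ ⟨y, rfl⟩
    rw [← map_mul, ← map_mul, mul_comm]
  rw [derivedSeries_succ, eq_bot_iff, ← hinl]
  exact commutator_mono h1 h1

section Affine

variable (R : Type*) [CommRing R]

def unitsMulAut : Rˣ →* MulAut (Multiplicative R) :=
  (MulAutMultiplicative R).symm.toMonoidHom.comp (DistribMulAction.toAddAut Rˣ R)

abbrev AffineGroup : Type _ := Multiplicative R ⋊[unitsMulAut R] Rˣ

variable {R} {A : Type*} [Group A] (ρ : A →* Rˣ)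

def affineRep : Coprod A A →* AffineGroup R :=
  Coprod.lift (SemidirectProduct.inr.comp ρ)
    ((MulAut.conj (SemidirectProduct.inl (Multiplicative.ofAdd 1))).toMonoidHom.comp
      (SemidirectProduct.inr.comp ρ))

theorem affineRep_inl_inv_mul_inr (a : A) :
    (affineRep ρ (Coprod.inl a))⁻¹ * affineRep ρ (Coprod.inr a)
      = SemidirectProduct.inl (Multiplicative.ofAdd (((ρ a)⁻¹ : Rˣ) - 1 : R)) := by
  simp only [affineRep, Coprod.lift_apply_inl, Coprod.lift_apply_inr, MonoidHom.comp_apply,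
    MulEquiv.coe_toMonoidHom, MulAut.conj_apply]
  rw [← mul_assoc, ← mul_assoc, ← map_inv, ← SemidirectProduct.inl_aut_inv,
    ← map_inv SemidirectProduct.inl, ← map_mul]
  congr 1
  simp [unitsMulAut, Units.smul_def, sub_eq_add_neg]

theorem verbalProductKer_sWord_le_ker_affineRep {k : ℕ} (hk : 2 ≤ k) :
    verbalProductKer {sWord k} A A ≤ (affineRep ρ).ker := by
  refine normalClosure_le_normal fun x hx => ?_
  suffices (verbalSubgroup {sWord k} (Coprod A A)).map (affineRep ρ) = ⊥ from
    (Subgroup.map_eq_bot_iff _).mp this hx.1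
  rw [eq_bot_iff, ← SemidirectProduct.derivedSeries_two_eq_bot (unitsMulAut R)]
  calc (verbalSubgroup {sWord k} (Coprod A A)).map (affineRep ρ)
      ≤ verbalSubgroup {sWord k} (AffineGroup R) := verbalSubgroup_map_le _ _
    _ ≤ derivedSeries (AffineGroup R) k := verbalSubgroup_sWord_le_derivedSeries k
    _ ≤ derivedSeries (AffineGroup R) 2 := derivedSeries_antitone _ hk

theorem infinite_verbalProduct_sWord [IsAddTorsionFree R] {a : A} (ha : ρ a ≠ 1) {k : ℕ}
    (hk : 2 ≤ k) : Infinite (VerbalProduct {sWord k} A A) := by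
  set χ := QuotientGroup.lift _ (affineRep ρ) (verbalProductKer_sWord_le_ker_affineRep ρ hk)
  set x := (vinl {sWord k} A A a)⁻¹ * vinr {sWord k} A A a
  have hχx : χ x = SemidirectProduct.inl (Multiplicative.ofAdd (((ρ a)⁻¹ : Rˣ) - 1 : R)) := by
    rw [map_mul, map_inv]
    exact affineRep_inl_inv_mul_inr ρ a
  by_contra hinf
  have : Finite (VerbalProduct {sWord k} A A) := not_infinite_iff_finite.mp hinf
  have hord := χ.isOfFinOrder (isOfFinOrder_of_finite x)
  rw [hχx, SemidirectProduct.inl_injective.isOfFinOrder_iff, isOfFinOrder_iff_eq_one,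
    ofAdd_eq_one, sub_eq_zero, Units.val_eq_one, inv_eq_one] at hord
  exact ha hord

end Affine

/-- For `n ≥ 2` and `k ≥ 2`, the `k`-solvable product `(ℤ/nℤ) ∗_{s_k} (ℤ/nℤ)` is an
infinite solvable group; in particular a verbal product of two finite groups can be
infinite. -/
theorem solvableProduct_zmod_infinite (n k : ℕ) (hn : 2 ≤ n) (hk : 2 ≤ k) :
    Infinite (VerbalProduct {sWord k} (Multiplicative (ZMod n)) (Multiplicative (ZMod n))) ∧
    IsSolvable (VerbalProduct {sWord k} (Multiplicative (ZMod n)) (Multiplicative (ZMod n))) := by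
  have : Fact (1 < n) := ⟨hn⟩
  set ρ : Multiplicative (ZMod n) →* ℂˣ := Circle.toUnits.comp ZMod.toCircle.toMonoidHom
  have hρ : ρ (Multiplicative.ofAdd 1) ≠ 1 := by
    intro h
    have : ZMod.toCircle (1 : ZMod n) = ZMod.toCircle (0 : ZMod n) := by
      simpa [ρ, Units.ext_iff, Circle.ext_iff] using h
    exact one_ne_zero (ZMod.injective_toCircle this)
  obtain ⟨j, rfl⟩ : ∃ j, k = j + 1 := ⟨k - 1, by omega⟩
  exact ⟨infinite_verbalProduct_sWord ρ hρ hk, isSolvable_verbalProduct_sWord j⟩
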